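/- Carlitz's two formulas for q-Stirling numbers of the second kind agree: for 1 ≤ k ≤ N, (1−q)^{−(N−k)} ∑_{j=0}^{N−k} (−1)^j C(N, k+j) qbinom(k+j, j) equals S₂[N,k], where S₂ is defined by the recurrence S₂[n,k] = S₂[n−1,k−1] + [k]_q S₂[n−1,k] with boundary values S₂[n,1] = S₂[n,n] = 1. -/

import Mathlib

/-!
Write `A(k, m) = ∑ⱼ (-1)ʲ C(k+m, k+j) [k+j, j]_q` (`carlitzSum k m`). Pascal's rule for `C`
together with the second q-Pascal rule `[n+1, j+1] = q^(n-j) [n, j] + [n, j+1]` gives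
`A(k+1, m+1) = A(k, m+1) + (1 - q^(k+1)) A(k+1, m)`, and since `1 - q^(k+1) = (1 - q) [k+1]_q`
this is the Stirling recurrence for `(1 - q)^m S₂[k+m, k]`. The boundary values agree because
`A(k, 0) = 1` and the alternating row sums of binomial coefficients vanish.
-/

/-- Carlitz's q-Stirling numbers of the second kind, defined by the recurrence
`S₂[n+1,k+1] = S₂[n,k] + [k+1]_q S₂[n,k+1]`, in the field of rational functions in `q`.
This definition yields the boundary values `S₂[n,1] = S₂[n,n] = 1`. -/
noncomputable def qStirling2 : ℕ → ℕ → RatFunc ℚ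
  | 0, 0 => 1
  | 0, _ + 1 => 0
  | _ + 1, 0 => 0
  | n + 1, k + 1 => qStirling2 n k +
      (∑ i ∈ Finset.range (k + 1), (RatFunc.X : RatFunc ℚ) ^ i) * qStirling2 n (k + 1)

/-- The Gaussian q-binomial coefficient, via the q-Pascal recurrence. -/
noncomputable def qbinom : ℕ → ℕ → RatFunc ℚ
  | _, 0 => 1
  | 0, _ + 1 => 0
  | n + 1, k + 1 => qbinom n k + RatFunc.X ^ (k + 1) * qbinom n (k + 1)

open Finset
open RatFunc (X)

lemma qbinom_zero_right (n : ℕ) : qbinom n 0 = 1 := by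
  cases n <;> rfl

lemma qbinom_succ_succ (n k : ℕ) :
    qbinom (n + 1) (k + 1) = qbinom n k + X ^ (k + 1) * qbinom n (k + 1) := rfl

lemma qbinom_eq_zero_of_lt : ∀ {n k : ℕ}, n < k → qbinom n k = 0
  | 0, _ + 1, _ => rfl
  | n + 1, k + 1, h => by
    rw [qbinom_succ_succ, qbinom_eq_zero_of_lt (by omega : n < k),
      qbinom_eq_zero_of_lt (by omega : n < k + 1)]
    ring

lemma qbinom_self : ∀ n : ℕ, qbinom n n = 1
  | 0 => rfl
  | n + 1 => by
    rw [qbinom_succ_succ, qbinom_self n, qbinom_eq_zero_of_lt n.lt_succ_self]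
    ring

lemma qbinom_succ_succ' : ∀ n k : ℕ,
    qbinom (n + 1) (k + 1) = X ^ (n - k) * qbinom n k + qbinom n (k + 1)
  | 0, 0 => by simp [qbinom_succ_succ, qbinom_zero_right, qbinom_eq_zero_of_lt]
  | 0, k + 1 => by simp [qbinom_eq_zero_of_lt]
  | n + 1, 0 => by
    have ih := qbinom_succ_succ' n 0
    simp only [qbinom_succ_succ _ 0, qbinom_zero_right, Nat.sub_zero, mul_one] at ih ⊢
    linear_combination X * ih
  | n + 1, k + 1 => by
    have hpow : X ^ (k + 2) * X ^ (n - (k + 1)) * qbinom n (k + 1)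
        = X ^ (n - k) * X ^ (k + 1) * qbinom n (k + 1) := by
      rcases le_or_gt (k + 1) n with hkn | hnk
      · rw [← pow_add, ← pow_add, show k + 2 + (n - (k + 1)) = n - k + (k + 1) by omega]
      · simp [qbinom_eq_zero_of_lt hnk]
    rw [Nat.add_sub_add_right]
    linear_combination qbinom_succ_succ (n + 1) (k + 1) + qbinom_succ_succ' n k
      + X ^ (k + 2) * qbinom_succ_succ' n (k + 1) - X ^ (n - k) * qbinom_succ_succ n k
      - qbinom_succ_succ n (k + 1) + hpow

lemma qStirling2_succ_succ (n k : ℕ) :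
    qStirling2 (n + 1) (k + 1) =
      qStirling2 n k + (∑ i ∈ range (k + 1), X ^ i) * qStirling2 n (k + 1) := rfl

lemma qStirling2_eq_zero_of_lt : ∀ {n k : ℕ}, n < k → qStirling2 n k = 0
  | 0, _ + 1, _ => rfl
  | n + 1, k + 1, h => by
    rw [qStirling2_succ_succ, qStirling2_eq_zero_of_lt (by omega : n < k),
      qStirling2_eq_zero_of_lt (by omega : n < k + 1)]
    ring

lemma qStirling2_self : ∀ n : ℕ, qStirling2 n n = 1
  | 0 => rfl
  | n + 1 => by
    rw [qStirling2_succ_succ, qStirling2_self n, qStirling2_eq_zero_of_lt n.lt_succ_self]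
    ring

noncomputable def carlitzTerm (k n j : ℕ) : RatFunc ℚ :=
  (-1) ^ j * (n.choose (k + j) : RatFunc ℚ) * qbinom (k + j) j

noncomputable def carlitzSum (k m : ℕ) : RatFunc ℚ :=
  ∑ j ∈ range (m + 1), carlitzTerm k (k + m) j

lemma carlitzTerm_eq_zero_of_lt {k n j : ℕ} (h : n < k + j) : carlitzTerm k n j = 0 := by
  simp [carlitzTerm, Nat.choose_eq_zero_of_lt h]

lemma carlitzTerm_succ_succ_zero (k n : ℕ) :
    carlitzTerm (k + 1) (n + 1) 0 = carlitzTerm k n 0 + carlitzTerm (k + 1) n 0 := by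
  simp only [carlitzTerm, add_zero, Nat.choose_succ_succ, qbinom_zero_right]
  push_cast
  ring

lemma carlitzTerm_succ_succ_succ (k n j : ℕ) :
    carlitzTerm (k + 1) (n + 1) (j + 1) =
      carlitzTerm k n (j + 1) + carlitzTerm (k + 1) n (j + 1)
        - X ^ (k + 1) * carlitzTerm (k + 1) n j := by
  have hpascal := qbinom_succ_succ' (k + 1 + j) j
  rw [show k + 1 + j - j = k + 1 by omega] at hpascal
  simp only [carlitzTerm, show k + 1 + (j + 1) = k + (j + 1) + 1 by omega,
    show k + (j + 1) = k + 1 + j by omega, Nat.choose_succ_succ, hpascal]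
  push_cast
  ring

lemma sum_carlitzTerm_succ_succ (k n m : ℕ) :
    ∑ j ∈ range (m + 2), carlitzTerm (k + 1) (n + 1) j =
      ∑ j ∈ range (m + 2), carlitzTerm k n j + ∑ j ∈ range (m + 2), carlitzTerm (k + 1) n j
        - X ^ (k + 1) * ∑ j ∈ range (m + 1), carlitzTerm (k + 1) n j := by
  rw [sum_range_succ', sum_range_succ' (carlitzTerm k n),
    sum_range_succ' (carlitzTerm (k + 1) n)]
  simp only [carlitzTerm_succ_succ_succ, carlitzTerm_succ_succ_zero, sum_add_distrib,
    sum_sub_distrib, mul_sum]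
  ring

lemma carlitzSum_succ_succ (k m : ℕ) :
    carlitzSum (k + 1) (m + 1) =
      carlitzSum k (m + 1) + (1 - X ^ (k + 1)) * carlitzSum (k + 1) m := by
  have hlast : carlitzTerm (k + 1) (k + m + 1) (m + 1) = 0 :=
    carlitzTerm_eq_zero_of_lt (by omega)
  simp only [carlitzSum, show k + 1 + (m + 1) = k + m + 1 + 1 by omega,
    show k + (m + 1) = k + m + 1 by omega, show k + 1 + m = k + m + 1 by omega]
  rw [sum_carlitzTerm_succ_succ, sum_range_succ (carlitzTerm (k + 1) _) (m + 1), hlast]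
  ring

lemma carlitzSum_zero_right (k : ℕ) : carlitzSum k 0 = 1 := by
  simp [carlitzSum, carlitzTerm, qbinom_zero_right]

lemma carlitzSum_zero_left (m : ℕ) : carlitzSum 0 m = if m = 0 then 1 else 0 := by
  simp only [carlitzSum, carlitzTerm, zero_add, qbinom_self, mul_one]
  exact_mod_cast Int.alternating_sum_range_choose

lemma qStirling2_zero_right (n : ℕ) : qStirling2 n 0 = if n = 0 then 1 else 0 := by
  cases n <;> rfl

theorem carlitzSum_eq_mul_qStirling2 (k m : ℕ) :
    carlitzSum k m = (1 - X) ^ m * qStirling2 (k + m) k := by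
  induction k generalizing m with
  | zero =>
    rw [carlitzSum_zero_left, zero_add, qStirling2_zero_right]
    split_ifs with hm <;> simp [hm]
  | succ k ihk =>
    induction m with
    | zero => rw [carlitzSum_zero_right, add_zero, qStirling2_self, pow_zero, one_mul]
    | succ m ihm =>
      rw [carlitzSum_succ_succ, ihk, ihm, show k + 1 + (m + 1) = k + (m + 1) + 1 by omega,
        qStirling2_succ_succ, show k + (m + 1) = k + 1 + m by omega, ← mul_neg_geom_sum]
      ring

lemma one_sub_X_ne_zero : (1 - X : RatFunc ℚ) ≠ 0 := by
  intro h
  rw [sub_eq_zero] at h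
  simpa using congrArg (RatFunc.eval (RingHom.id ℚ) 0) h

theorem stmt2_general (N k : ℕ) (h : k ≤ N) :
    ((1 - RatFunc.X : RatFunc ℚ) ^ (N - k))⁻¹ *
        ∑ j ∈ Finset.range (N - k + 1),
          (-1 : RatFunc ℚ) ^ j * (N.choose (k + j) : RatFunc ℚ) * qbinom (k + j) j
      = qStirling2 N k := by
  obtain ⟨m, rfl⟩ := Nat.exists_eq_add_of_le h
  rw [Nat.add_sub_cancel_left]
  change ((1 - X) ^ m)⁻¹ * carlitzSum k m = _
  rw [carlitzSum_eq_mul_qStirling2, inv_mul_cancel_left₀ (pow_ne_zero _ one_sub_X_ne_zero)]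

theorem stmt2 (N k : ℕ) (hk : 1 ≤ k) (h : k ≤ N) :
    ((1 - RatFunc.X : RatFunc ℚ) ^ (N - k))⁻¹ *
        ∑ j ∈ Finset.range (N - k + 1),
          (-1 : RatFunc ℚ) ^ j * (N.choose (k + j) : RatFunc ℚ) * qbinom (k + j) j
      = qStirling2 N k :=
  stmt2_general N k h
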